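/- Let N ≥ 3, let z, w_1,…,w_N be zero-mean, square-integrable real random variables on a probability space that are pairwise uncorrelated (E[z·w_i] = 0 for all i and E[w_i·w_j] = 0 for all i ≠ j), with E[z²] = σ_z² > 0 and E[w_i²] = σ_wi². Let δ_1,…,δ_N > 0 and define e_i = δ_i·z + w_i. Then the correlations corr(e_i, e_j) are equal across all pairs i ≠ j if and only if the noise-to-loading ratios σ_wi²/δ_i² are equal for all i; that is, corr(e_i,e_j) = corr(e_k,e_l) for all i≠j and k≠l if and only if σ_wi²/δ_i² = σ_wj²/δ_j² for all i, j. -/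

import Mathlib

open MeasureTheory

lemma l2_mul_integrable {Ω : Type*} [MeasurableSpace Ω] {μ : Measure Ω} {f g : Ω → ℝ}
    (hf : MemLp f 2 μ) (hg : MemLp g 2 μ) : Integrable (fun ω => f ω * g ω) μ := by
  have hf2 : Integrable (fun ω => f ω ^ 2) μ :=
    (memLp_two_iff_integrable_sq hf.aestronglyMeasurable).1 hf
  have hg2 : Integrable (fun ω => g ω ^ 2) μ :=
    (memLp_two_iff_integrable_sq hg.aestronglyMeasurable).1 hg
  refine Integrable.mono' ((hf2.add hg2).div_const 2)
    (hf.aestronglyMeasurable.mul hg.aestronglyMeasurable) ?_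
  filter_upwards with ω
  simp only [Pi.add_apply, Real.norm_eq_abs]
  rcases abs_cases (f ω * g ω) with ⟨h, _⟩ | ⟨h, _⟩ <;> rw [h] <;>
    nlinarith [sq_nonneg (f ω - g ω), sq_nonneg (f ω + g ω)]

/-- Single-factor errors with heterogeneous loadings (N ≥ 3): the correlations
`corr(e_i, e_j)` are equal across all pairs `i ≠ j` iff the noise-to-loading ratios
`σ_wi²/δ_i²` are equal across all `i`. -/
theorem stmt18
    {Ω : Type*} [MeasurableSpace Ω] (μ : Measure Ω) [IsProbabilityMeasure μ]
    (N : ℕ) (hN : 3 ≤ N) (z : Ω → ℝ) (w : Fin N → Ω → ℝ)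
    (hzL2 : MemLp z 2 μ) (hwL2 : ∀ i, MemLp (w i) 2 μ)
    (hzmean : ∫ ω, z ω ∂μ = 0) (hwmean : ∀ i, ∫ ω, w i ω ∂μ = 0)
    (hzw : ∀ i, ∫ ω, z ω * w i ω ∂μ = 0)
    (hww : ∀ i j, i ≠ j → ∫ ω, w i ω * w j ω ∂μ = 0)
    (σz2 : ℝ) (hσz2 : ∫ ω, (z ω) ^ 2 ∂μ = σz2) (hσz2pos : 0 < σz2)
    (σw2 : Fin N → ℝ) (hσw2 : ∀ i, ∫ ω, (w i ω) ^ 2 ∂μ = σw2 i)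
    (δ : Fin N → ℝ) (hδ : ∀ i, 0 < δ i)
    (e : Fin N → Ω → ℝ) (he : ∀ i, e i = fun ω => δ i * z ω + w i ω)
    (corr : Fin N → Fin N → ℝ)
    (hcorr : ∀ i j, corr i j =
      (∫ ω, e i ω * e j ω ∂μ) /
        (Real.sqrt (∫ ω, (e i ω) ^ 2 ∂μ) * Real.sqrt (∫ ω, (e j ω) ^ 2 ∂μ))) :
    (∀ i j k l, i ≠ j → k ≠ l → corr i j = corr k l) ↔
      (∀ i j, σw2 i / (δ i) ^ 2 = σw2 j / (δ j) ^ 2) := by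
  -- basic integrability
  have hzz : Integrable (fun ω => z ω ^ 2) μ :=
    (memLp_two_iff_integrable_sq hzL2.aestronglyMeasurable).1 hzL2
  -- expansion of cross moments
  have hexp : ∀ i j, ∫ ω, e i ω * e j ω ∂μ =
      δ i * δ j * σz2 + ∫ ω, w i ω * w j ω ∂μ := by
    intro i j
    rw [he i, he j]
    have key : (fun ω => (δ i * z ω + w i ω) * (δ j * z ω + w j ω)) =
        fun ω => δ i * δ j * z ω ^ 2 + (δ i * (z ω * w j ω) +
          (δ j * (z ω * w i ω) + w i ω * w j ω)) := by
      funext ω; ring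
    rw [key]
    have h1 : Integrable (fun ω => δ i * δ j * z ω ^ 2) μ := hzz.const_mul _
    have h2 : Integrable (fun ω => δ i * (z ω * w j ω)) μ :=
      (l2_mul_integrable hzL2 (hwL2 j)).const_mul _
    have h3 : Integrable (fun ω => δ j * (z ω * w i ω)) μ :=
      (l2_mul_integrable hzL2 (hwL2 i)).const_mul _
    have h4 : Integrable (fun ω => w i ω * w j ω) μ :=
      l2_mul_integrable (hwL2 i) (hwL2 j)
    have h34 : Integrable (fun ω => δ j * (z ω * w i ω) + w i ω * w j ω) μ := h3.add h4
    have h234 : Integrable (fun ω => δ i * (z ω * w j ω) +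
        (δ j * (z ω * w i ω) + w i ω * w j ω)) μ := h2.add h34
    rw [integral_add h1 h234, integral_add h2 h34,
      integral_add h3 h4, integral_const_mul, integral_const_mul, integral_const_mul,
      hσz2, hzw i, hzw j]
    ring
  have hσw2nonneg : ∀ i, 0 ≤ σw2 i := fun i => by
    rw [← hσw2 i]; exact integral_nonneg fun ω => sq_nonneg _
  -- variances
  have hV : ∀ i, ∫ ω, (e i ω) ^ 2 ∂μ = δ i ^ 2 * (σz2 + σw2 i / δ i ^ 2) := by
    intro i
    have : ∫ ω, (e i ω) ^ 2 ∂μ = ∫ ω, e i ω * e i ω ∂μ := by simp_rw [sq]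
    have hwq : ∫ ω, w i ω * w i ω ∂μ = σw2 i := by
      rw [← hσw2 i]; congr 1; funext ω; ring
    rw [this, hexp i i, hwq]
    have hδi := (hδ i).ne'
    field_simp
  set r : Fin N → ℝ := fun i => σw2 i / δ i ^ 2 with hr
  have hrpos : ∀ i, 0 < σz2 + r i := fun i =>
    lt_of_lt_of_le hσz2pos (by
      have : 0 ≤ r i := div_nonneg (hσw2nonneg i) (sq_nonneg _)
      linarith)
  set s : Fin N → ℝ := fun i => Real.sqrt (σz2 + r i) with hs
  have hspos : ∀ i, 0 < s i := fun i => Real.sqrt_pos.2 (hrpos i)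
  have hssq : ∀ i, s i ^ 2 = σz2 + r i := fun i => Real.sq_sqrt (hrpos i).le
  have hsqrtV : ∀ i, Real.sqrt (∫ ω, (e i ω) ^ 2 ∂μ) = δ i * s i := by
    intro i
    rw [hV i, Real.sqrt_mul (sq_nonneg _), Real.sqrt_sq (hδ i).le]
  -- correlation formula for i ≠ j
  have hcorr' : ∀ i j, i ≠ j → corr i j = σz2 / (s i * s j) := by
    intro i j hij
    rw [hcorr i j, hsqrtV i, hsqrtV j, hexp i j, hww i j hij, add_zero]
    have hδi := (hδ i).ne'
    have hδj := (hδ j).ne'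
    have hsi := (hspos i).ne'
    have hsj := (hspos j).ne'
    field_simp
  constructor
  · intro h i j
    rcases eq_or_ne i j with rfl | hij
    · rfl
    -- find k ≠ i, k ≠ j
    have hcard : ({i, j} : Finset (Fin N)).card ≤ 2 :=
      (Finset.card_insert_le _ _).trans (by simp)
    have hcompl : 0 < ({i, j}ᶜ : Finset (Fin N)).card := by
      rw [Finset.card_compl]
      simp only [Fintype.card_fin]
      omega
    obtain ⟨k, hk⟩ := Finset.card_pos.1 hcompl
    simp only [Finset.mem_compl, Finset.mem_insert, Finset.mem_singleton, not_or] at hk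
    obtain ⟨hki, hkj⟩ := hk
    have heq := h k i k j hki hkj
    rw [hcorr' k i hki, hcorr' k j hkj] at heq
    have hsij : s i = s j := by
      have h1 : s k * s i ≠ 0 := mul_ne_zero (hspos k).ne' (hspos i).ne'
      have h2 : s k * s j ≠ 0 := mul_ne_zero (hspos k).ne' (hspos j).ne'
      rw [div_eq_div_iff h1 h2] at heq
      have h3 := mul_left_cancel₀ hσz2pos.ne' heq
      exact (mul_left_cancel₀ (hspos k).ne' h3).symm
    have : σz2 + r i = σz2 + r j := by rw [← hssq i, ← hssq j, hsij]
    have : r i = r j := by linarith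
    exact this
  · intro h i j k l hij hkl
    have hsik : ∀ a b : Fin N, s a = s b := by
      intro a b
      simp only [hs, hr]
      rw [h a b]
    rw [hcorr' i j hij, hcorr' k l hkl, hsik i k, hsik j l]
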